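/- arXiv:2312.13493 — 2 statements merged into one kernel-verified Lean document; each statement's English description precedes it below -/
import Mathlib

section
/- Let γ = α_{ij} be a positive root of A_n and let < denote the convex order on positive roots defined by α_{ab} < α_{cd} iff b > d, or b = d and a > c. Then the sum of (γ, θ) over all positive roots θ with θ < γ equals j − i − 1, and the sum of (γ, θ) over all positive roots θ with θ > γ also equals j − i − 1. In particular these two sums are equal. -/
/-- The positive root `α_{ij} = ε_i - ε_j` of `A_n`, as a vector in `ℝ^{n+1}`. -/
def aroot (n : ℕ) (i j : Fin (n + 1)) : Fin (n + 1) → ℝ :=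
  fun t => (if t = i then 1 else 0) - (if t = j then 1 else 0)

/-- The standard Euclidean inner product on `ℝ^{n+1}`. -/
def ip (n : ℕ) (x y : Fin (n + 1) → ℝ) : ℝ := ∑ t, x t * y t

/-!
Expanding `(α_{ij}, α_{ab}) = [a = i] - [a = j] - [b = i] + [b = j]`, the sum over any set of
positive roots is a signed count of the roots in it that start or end at `i` or `j`. For the roots
below `α_{ij}` in the convex order, those starting at `i` and at `j` are the `α_{ib}`, `α_{jb}` with
`b > j` and cancel, none ends at `i`, and the `α_{aj}` with `i < a < j` remain. For the roots
above `α_{ij}`, the `α_{ai}` and `α_{aj}` with `a < i` cancel, none starts at `j`, and the `α_{ib}`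
with `i < b < j` remain.
-/

open Finset

namespace Aroot

variable {n : ℕ}

/-- The positive roots `θ < α_{ij}` in the convex order, as pairs of indices. -/
def below (i j : Fin (n + 1)) : Finset (Fin (n + 1) × Fin (n + 1)) :=
  univ.filter fun p => p.1 < p.2 ∧ (j < p.2 ∨ (p.2 = j ∧ i < p.1))

/-- The positive roots `θ > α_{ij}` in the convex order, as pairs of indices. -/
def above (i j : Fin (n + 1)) : Finset (Fin (n + 1) × Fin (n + 1)) :=
  univ.filter fun p => p.1 < p.2 ∧ (p.2 < j ∨ (j = p.2 ∧ p.1 < i))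

lemma ip_aroot (i j a b : Fin (n + 1)) :
    ip n (aroot n i j) (aroot n a b) =
      (if a = i then (1 : ℝ) else 0) - (if a = j then 1 else 0)
        - (if b = i then 1 else 0) + (if b = j then 1 else 0) := by
  simp only [ip, aroot, sub_mul, mul_sub, ite_mul, one_mul, zero_mul, sum_sub_distrib]
  simp [eq_comm]
  ring

lemma sum_ip_aroot (i j : Fin (n + 1)) (S : Finset (Fin (n + 1) × Fin (n + 1))) :
    ∑ p ∈ S, ip n (aroot n i j) (aroot n p.1 p.2) =
      (#{p ∈ S | p.1 = i} : ℝ) - #{p ∈ S | p.1 = j} - #{p ∈ S | p.2 = i}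
        + #{p ∈ S | p.2 = j} := by
  simp only [← sum_boole, ← sum_sub_distrib, ← sum_add_distrib, ip_aroot]

variable {i j : Fin (n + 1)}

lemma sum_ip_aroot_below (hij : i < j) :
    ∑ p ∈ below i j, ip n (aroot n i j) (aroot n p.1 p.2) = (j : ℕ) - (i : ℕ) - 1 := by
  have hij' : (i : ℕ) < j := hij
  have hi : {p ∈ below i j | p.1 = i} = {i} ×ˢ Ioi j := by
    ext p; simp only [below, mem_filter, mem_univ, true_and, mem_product, mem_singleton,
      mem_Ioi, Fin.lt_def, Fin.ext_iff]; omega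
  have hj : {p ∈ below i j | p.1 = j} = {j} ×ˢ Ioi j := by
    ext p; simp only [below, mem_filter, mem_univ, true_and, mem_product, mem_singleton,
      mem_Ioi, Fin.lt_def, Fin.ext_iff]; omega
  have hi' : {p ∈ below i j | p.2 = i} = ∅ := by
    ext p; simp only [below, mem_filter, mem_univ, true_and, notMem_empty, iff_false,
      Fin.lt_def, Fin.ext_iff]; omega
  have hj' : {p ∈ below i j | p.2 = j} = Ioo i j ×ˢ {j} := by
    ext p; simp only [below, mem_filter, mem_univ, true_and, mem_product, mem_singleton,
      mem_Ioo, Fin.lt_def, Fin.ext_iff]; omega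
  rw [sum_ip_aroot, hi, hj, hi', hj']
  simp [Fin.card_Ioo, Nat.cast_sub (Nat.sub_pos_of_lt hij'), Nat.cast_sub hij'.le]

lemma sum_ip_aroot_above (hij : i < j) :
    ∑ p ∈ above i j, ip n (aroot n i j) (aroot n p.1 p.2) = (j : ℕ) - (i : ℕ) - 1 := by
  have hij' : (i : ℕ) < j := hij
  have hi : {p ∈ above i j | p.1 = i} = {i} ×ˢ Ioo i j := by
    ext p; simp only [above, mem_filter, mem_univ, true_and, mem_product, mem_singleton,
      mem_Ioo, Fin.lt_def, Fin.ext_iff]; omega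
  have hj : {p ∈ above i j | p.1 = j} = ∅ := by
    ext p; simp only [above, mem_filter, mem_univ, true_and, notMem_empty, iff_false,
      Fin.lt_def, Fin.ext_iff]; omega
  have hi' : {p ∈ above i j | p.2 = i} = Iio i ×ˢ {i} := by
    ext p; simp only [above, mem_filter, mem_univ, true_and, mem_product, mem_singleton,
      mem_Iio, Fin.lt_def, Fin.ext_iff]; omega
  have hj' : {p ∈ above i j | p.2 = j} = Iio i ×ˢ {j} := by
    ext p; simp only [above, mem_filter, mem_univ, true_and, mem_product, mem_singleton,
      mem_Iio, Fin.lt_def, Fin.ext_iff]; omega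
  rw [sum_ip_aroot, hi, hj, hi', hj']
  simp [Fin.card_Ioo, Nat.cast_sub (Nat.sub_pos_of_lt hij'), Nat.cast_sub hij'.le]

end Aroot

/-- For `γ = α_{ij}` and the convex order `α_{ab} < α_{cd}` iff
`b > d`, or `b = d` and `a > c`, the sum of `(γ, θ)` over positive roots `θ < γ` equals
`j - i - 1`, and likewise over `θ > γ`; in particular the two sums agree. -/
theorem stmt4 (n : ℕ) (i j : Fin (n + 1)) (hij : i < j) :
    (∑ p ∈ Finset.univ.filter (fun p : Fin (n + 1) × Fin (n + 1) =>
        p.1 < p.2 ∧ (j < p.2 ∨ (p.2 = j ∧ i < p.1))),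
      ip n (aroot n i j) (aroot n p.1 p.2)) = ((j : ℕ) : ℝ) - ((i : ℕ) : ℝ) - 1 ∧
    (∑ p ∈ Finset.univ.filter (fun p : Fin (n + 1) × Fin (n + 1) =>
        p.1 < p.2 ∧ (p.2 < j ∨ (j = p.2 ∧ p.1 < i))),
      ip n (aroot n i j) (aroot n p.1 p.2)) = ((j : ℕ) : ℝ) - ((i : ℕ) : ℝ) - 1 :=
  ⟨Aroot.sum_ip_aroot_below hij, Aroot.sum_ip_aroot_above hij⟩
end

section
/- Let A be the quantum exterior algebra over a field k on generators e_1, ..., e_m with relations e_i² = 0 and e_i e_j = −q^{a_{ij}} e_j e_i for i < j, where q ≠ 0 and the integers a_{ij} satisfy: for each fixed i, Σ_{j < i} a_{ji} = Σ_{j > i} a_{ij}. Then for each generator e_i, writing ê_i := e_1 ··· e_{i-1} e_{i+1} ··· e_m, one has e_i · ê_i = (−1)^{m−1} ê_i · e_i; consequently the Nakayama automorphism of the Frobenius structure B(v,w) = ι([vw]_m) satisfies σ(e_i) = (−1)^{m−1} e_i for all i. -/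
/-! Commuting `e_i` past `ê_i` moves it across each `e_j`, `j ≠ i`, once, picking up the
factor `-q^{a_ij}` for `j > i` and `-q^{-a_ji}` for `j < i`; by the balance condition the powers
of `q` cancel and only `(-1)^{m-1}` survives.

In the monomial basis, `b_S b_T` is a nonzero multiple of the top monomial if `T = Sᶜ` and has
zero top coefficient otherwise. So only the `ê_i`-coordinate of `x` contributes to the top
coefficients of `e_i x` and `x e_i`, and the first relation gives
`B(e_i, y) = B(y, (-1)^{m-1} e_i)`; the same fact makes `B` nondegenerate, which forces
`σ(e_i) = (-1)^{m-1} e_i`. -/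

namespace QuantumExterior

open Finset

section SkewCommuting

variable {k A ι : Type*} [Field k] [Ring A] [Algebra k A] {e : ι → A} {c : ι → ι → k}
  (hc : ∀ i j, i ≠ j → e i * e j = c i j • (e j * e i))
include hc

theorem mul_list_prod_of_notMem {i : ι} : ∀ {l : List ι}, i ∉ l →
    e i * (l.map e).prod = (l.map (c i)).prod • ((l.map e).prod * e i)
  | [], _ => by simp
  | j :: t, h => by
    rw [List.mem_cons, not_or] at h
    simp only [List.map_cons, List.prod_cons]
    rw [← mul_assoc, hc i j h.1, smul_mul_assoc, mul_assoc, mul_list_prod_of_notMem h.2,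
      mul_smul_comm, smul_smul, ← mul_assoc]

theorem mul_list_prod_of_mem (hsq : ∀ i, e i * e i = 0) {i : ι} :
    ∀ {l : List ι}, i ∈ l → e i * (l.map e).prod = 0
  | j :: t, h => by
    simp only [List.map_cons, List.prod_cons, ← mul_assoc]
    by_cases hij : i = j
    · rw [hij, hsq, zero_mul]
    · rw [hc i j hij, smul_mul_assoc, mul_assoc,
        mul_list_prod_of_mem hsq ((List.mem_cons.1 h).resolve_left hij), mul_zero, smul_zero]

theorem list_prod_eq_zero_of_not_nodup (hsq : ∀ i, e i * e i = 0) :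
    ∀ {l : List ι}, ¬ l.Nodup → (l.map e).prod = 0
  | [], h => absurd List.nodup_nil h
  | i :: t, h => by
    rw [List.map_cons, List.prod_cons]
    by_cases ht : t.Nodup
    · have hit : i ∈ t := by_contra fun hit => h (List.nodup_cons.2 ⟨hit, ht⟩)
      exact mul_list_prod_of_mem hc hsq hit
    · rw [list_prod_eq_zero_of_not_nodup hsq ht, mul_zero]

theorem exists_list_prod_eq_smul_of_perm (hc0 : ∀ i j, c i j ≠ 0) {l₁ l₂ : List ι}
    (h : l₁.Perm l₂) (hl : l₁.Nodup) :
    ∃ γ : k, γ ≠ 0 ∧ (l₁.map e).prod = γ • (l₂.map e).prod := by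
  induction h with
  | nil => exact ⟨1, one_ne_zero, by rw [one_smul]⟩
  | cons x _ ih =>
    obtain ⟨γ, hγ, hp⟩ := ih (List.nodup_cons.1 hl).2
    exact ⟨γ, hγ, by simp only [List.map_cons, List.prod_cons, hp, mul_smul_comm]⟩
  | swap x y l =>
    have hxy : y ≠ x := fun h => (List.nodup_cons.1 hl).1 (h ▸ List.mem_cons_self)
    refine ⟨c y x, hc0 y x, ?_⟩
    simp only [List.map_cons, List.prod_cons, ← mul_assoc, hc y x hxy, smul_mul_assoc]
  | trans h₁₂ _ ih₁₂ ih₂₃ =>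
    obtain ⟨γ, hγ, hp⟩ := ih₁₂ hl
    obtain ⟨δ, hδ, hp'⟩ := ih₂₃ (h₁₂.nodup_iff.1 hl)
    exact ⟨γ * δ, mul_ne_zero hγ hδ, by rw [hp, hp', smul_smul]⟩

end SkewCommuting

section OrderedBasis

variable {k A ι : Type*} [Field k] [Ring A] [Algebra k A] [LinearOrder ι] {e : ι → A}
  {c : ι → ι → k} (hc : ∀ i j, i ≠ j → e i * e j = c i j • (e j * e i))
  (hc0 : ∀ i j, c i j ≠ 0) (hsq : ∀ i, e i * e i = 0) {b : Module.Basis (Finset ι) k A}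
  (hb : ∀ S : Finset ι, b S = ((S.sort (· ≤ ·)).map e).prod)
include hc hb

include hsq in
theorem basis_mul_basis_eq_zero {S T : Finset ι} (h : ¬ Disjoint S T) : b S * b T = 0 := by
  obtain ⟨x, hxS, hxT⟩ := not_disjoint_iff.1 h
  rw [hb, hb, ← List.prod_append, ← List.map_append]
  refine list_prod_eq_zero_of_not_nodup hc hsq fun hl => ?_
  exact List.disjoint_of_nodup_append hl ((mem_sort _).2 hxS) ((mem_sort _).2 hxT)

include hc0 in
theorem exists_basis_mul_basis_eq_smul {S T : Finset ι} (h : Disjoint S T) :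
    ∃ γ : k, γ ≠ 0 ∧ b S * b T = γ • b (S ∪ T) := by
  have hl : (S.sort (· ≤ ·) ++ T.sort (· ≤ ·)).Nodup :=
    List.nodup_append.2 ⟨sort_nodup _ _, sort_nodup _ _, fun x hx y hy hxy =>
      disjoint_left.1 h ((mem_sort _).1 hx) (hxy ▸ (mem_sort _).1 hy)⟩
  have hperm : (S.sort (· ≤ ·) ++ T.sort (· ≤ ·)).Perm ((S ∪ T).sort (· ≤ ·)) :=
    List.perm_of_nodup_nodup_toFinset_eq hl (sort_nodup _ _) (by
      rw [List.toFinset_append, sort_toFinset, sort_toFinset, sort_toFinset])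
  rw [hb, hb, hb, ← List.prod_append, ← List.map_append]
  exact exists_list_prod_eq_smul_of_perm hc hc0 hperm hl

variable [Fintype ι]

include hc0 in
theorem repr_basis_mul_basis_compl_ne_zero (S : Finset ι) : b.repr (b S * b Sᶜ) univ ≠ 0 := by
  obtain ⟨γ, hγ, hp⟩ :=
    exists_basis_mul_basis_eq_smul hc hc0 hb (disjoint_compl_right (a := S))
  rwa [hp, union_compl, map_smul, b.repr_self, Finsupp.smul_apply, Finsupp.single_eq_same,
    smul_eq_mul, mul_one]

include hc0 hsq

theorem isCompl_of_repr_basis_mul_basis_ne_zero {S T : Finset ι}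
    (h : b.repr (b S * b T) univ ≠ 0) : IsCompl S T := by
  by_cases hST : Disjoint S T
  · refine ⟨hST, codisjoint_iff.2 (?_ : S ∪ T = univ)⟩
    obtain ⟨γ, -, hp⟩ := exists_basis_mul_basis_eq_smul hc hc0 hb hST
    by_contra hU
    rw [hp, map_smul, b.repr_self, Finsupp.smul_apply, Finsupp.single_eq_of_ne (Ne.symm hU),
      smul_zero] at h
    exact h rfl
  · rw [basis_mul_basis_eq_zero hc hsq hb hST, map_zero] at h
    exact absurd rfl h

theorem repr_basis_mul_univ (S : Finset ι) (x : A) :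
    b.repr (b S * x) univ = b.repr x Sᶜ * b.repr (b S * b Sᶜ) univ := by
  conv_lhs => rw [← b.sum_repr x]
  simp only [mul_sum, mul_smul_comm, map_sum, map_smul, Finsupp.finsetSum_apply,
    Finsupp.smul_apply, smul_eq_mul]
  refine sum_eq_single Sᶜ (fun T _ hT => ?_) (fun h => absurd (mem_univ _) h)
  by_contra h
  exact hT (isCompl_of_repr_basis_mul_basis_ne_zero hc hc0 hsq hb
    (right_ne_zero_of_mul h)).compl_eq.symm

theorem repr_mul_basis_univ (S : Finset ι) (x : A) :
    b.repr (x * b S) univ = b.repr x Sᶜ * b.repr (b Sᶜ * b S) univ := by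
  conv_lhs => rw [← b.sum_repr x]
  simp only [sum_mul, smul_mul_assoc, map_sum, map_smul, Finsupp.finsetSum_apply,
    Finsupp.smul_apply, smul_eq_mul]
  refine sum_eq_single Sᶜ (fun T _ hT => ?_) (fun h => absurd (mem_univ _) h)
  by_contra h
  exact hT ((isCompl_of_repr_basis_mul_basis_ne_zero hc hc0 hsq hb
    (right_ne_zero_of_mul h)).symm.compl_eq.symm)

theorem eq_zero_of_forall_repr_mul_eq_zero {z : A} (h : ∀ y, b.repr (y * z) univ = 0) :
    z = 0 := by
  refine b.ext_elem fun T => ?_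
  rw [map_zero, Finsupp.zero_apply]
  have hT := h (b Tᶜ)
  have hne := repr_basis_mul_basis_compl_ne_zero hc hc0 hb Tᶜ
  rw [repr_basis_mul_univ hc hc0 hsq hb Tᶜ z] at hT
  rw [compl_compl] at hT hne
  exact (mul_eq_zero.1 hT).resolve_right hne

theorem repr_basis_mul_univ_eq_mul_repr_mul_basis_univ {S : Finset ι} {ε : k}
    (hS : b S * b Sᶜ = ε • (b Sᶜ * b S)) (x : A) :
    b.repr (b S * x) univ = ε * b.repr (x * b S) univ := by
  rw [repr_basis_mul_univ hc hc0 hsq hb S x, repr_mul_basis_univ hc hc0 hsq hb S x, hS, map_smul,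
    Finsupp.smul_apply, smul_eq_mul, mul_left_comm]

end OrderedBasis

section QuantumRelations

variable {k ι : Type*} [Field k] [LinearOrder ι]

def skewExponent (a : ι → ι → ℤ) (i j : ι) : ℤ := if i < j then a i j else -a j i

theorem mul_eq_neg_zpow_skewExponent_smul {A : Type*} [Ring A] [Algebra k A] {q : k}
    (hq : q ≠ 0) {a : ι → ι → ℤ} {e : ι → A}
    (hrel : ∀ i j, i < j → e i * e j = (-(q ^ (a i j))) • (e j * e i)) {i j : ι}
    (hij : i ≠ j) :
    e i * e j = (-(q ^ skewExponent a i j)) • (e j * e i) := by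
  rcases hij.lt_or_gt with hij | hji
  · rw [skewExponent, if_pos hij, hrel i j hij]
  · rw [skewExponent, if_neg (asymm hji), hrel j i hji, smul_smul, neg_mul_neg, zpow_neg,
      inv_mul_cancel₀ (zpow_ne_zero _ hq), one_smul]

theorem prod_zpow_eq_zpow_sum {q : k} (hq : q ≠ 0) (s : Finset ι) (f : ι → ℤ) :
    ∏ j ∈ s, q ^ f j = q ^ ∑ j ∈ s, f j := by
  classical
  induction s using Finset.induction with
  | empty => simp
  | insert _ _ h ih => rw [prod_insert h, sum_insert h, zpow_add₀ hq, ih]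

variable [Fintype ι]

theorem sum_erase_skewExponent_eq_zero {a : ι → ι → ℤ} {i : ι}
    (ha : ∑ j ∈ univ.filter (fun j => j < i), a j i =
      ∑ j ∈ univ.filter (fun j => i < j), a i j) :
    ∑ j ∈ univ.erase i, skewExponent a i j = 0 := by
  have hlt : (univ.erase i).filter (fun j => i < j) = univ.filter (fun j => i < j) := by
    rw [filter_erase, erase_eq_of_notMem (by simp)]
  have hgt : (univ.erase i).filter (fun j => ¬ i < j) = univ.filter (fun j => j < i) := by
    ext j
    simp only [mem_filter, mem_erase, mem_univ, and_true, true_and, not_lt]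
    exact ⟨fun h => h.2.lt_of_ne h.1, fun h => ⟨h.ne, h.le⟩⟩
  unfold skewExponent
  rw [sum_ite, hlt, hgt, sum_neg_distrib, ha, add_neg_cancel]

theorem prod_erase_neg_zpow_skewExponent {q : k} (hq : q ≠ 0) {a : ι → ι → ℤ} {i : ι}
    (ha : ∑ j ∈ univ.filter (fun j => j < i), a j i =
      ∑ j ∈ univ.filter (fun j => i < j), a i j) :
    ∏ j ∈ univ.erase i, -(q ^ skewExponent a i j) = (-1) ^ (Fintype.card ι - 1) := by
  rw [prod_neg, prod_zpow_eq_zpow_sum hq, sum_erase_skewExponent_eq_zero ha, zpow_zero, mul_one,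
    card_erase_of_mem (mem_univ i), card_univ]

end QuantumRelations

end QuantumExterior

open Finset QuantumExterior in
/-- Let `A` be the quantum exterior algebra on `e₁, …, e_m` over a
field `k`, with `eᵢ² = 0` and `eᵢeⱼ = -q^{a_{ij}} eⱼeᵢ` for `i < j`, where `q ≠ 0` and
the integer exponents satisfy the balance condition `Σ_{j<i} a_{ji} = Σ_{j>i} a_{ij}`
for every `i`; the strictly increasing monomials form a basis `b` indexed by subsets.
Write `ê_i` for the increasingly-ordered product of all generators except `e_i`, and
let `B(v,w) := ι([vw]_m) = ιc · (top coefficient of vw)` be the Frobenius form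
(`ιc ≠ 0`). Then `e_i ê_i = (-1)^{m-1} ê_i e_i`, and consequently any Nakayama
automorphism `σ` (i.e. satisfying `B(x,y) = B(y, σ(x))`) has
`σ(e_i) = (-1)^{m-1} e_i` for all `i`. -/
theorem stmt19 (k : Type*) [Field k] (m : ℕ) (q : k) (hq : q ≠ 0)
    (a : Fin m → Fin m → ℤ)
    (ha : ∀ i : Fin m,
      (∑ j ∈ Finset.univ.filter (fun j : Fin m => j < i), a j i)
        = ∑ j ∈ Finset.univ.filter (fun j : Fin m => i < j), a i j)
    (A : Type*) [Ring A] [Algebra k A]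
    (e : Fin m → A)
    (hsq : ∀ i : Fin m, e i * e i = 0)
    (hrel : ∀ i j : Fin m, i < j → e i * e j = (-(q ^ (a i j))) • (e j * e i))
    (b : Module.Basis (Finset (Fin m)) k A)
    (hb : ∀ S : Finset (Fin m), b S = ((S.sort (· ≤ ·)).map e).prod)
    (ιc : k) (hι : ιc ≠ 0)
    (B : A → A → k)
    (hB : ∀ v w : A, B v w = ιc * b.repr (v * w) Finset.univ)
    (ehat : Fin m → A)
    (hehat : ∀ i : Fin m, ehat i = (((Finset.univ.erase i).sort (· ≤ ·)).map e).prod) :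
    (∀ i : Fin m, e i * ehat i = ((-1 : k) ^ (m - 1)) • (ehat i * e i)) ∧
    (∀ σ : A →ₗ[k] A, (∀ x y : A, B x y = B y (σ x)) →
      ∀ i : Fin m, σ (e i) = ((-1 : k) ^ (m - 1)) • e i) := by
  set ε : k := (-1 : k) ^ (m - 1)
  have hc (i j : Fin m) (hij : i ≠ j) := mul_eq_neg_zpow_skewExponent_smul hq hrel hij
  have hc0 (i j : Fin m) : -(q ^ skewExponent a i j) ≠ 0 := neg_ne_zero.2 (zpow_ne_zero _ hq)
  have he (i : Fin m) : e i = b {i} := by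
    rw [hb, sort_singleton, List.map_singleton, List.prod_singleton]
  have hehat_eq (i : Fin m) : ehat i = b {i}ᶜ := by rw [hehat, hb, compl_singleton]
  have hcomm (i : Fin m) : e i * ehat i = ε • (ehat i * e i) := by
    rw [hehat, mul_list_prod_of_notMem hc (by simp [mem_sort]),
      ((sort_perm_toList _ _).map _).prod_eq, prod_map_toList,
      prod_erase_neg_zpow_skewExponent hq (ha i), Fintype.card_fin]
  refine ⟨hcomm, fun σ hσ i =>
    sub_eq_zero.1 (eq_zero_of_forall_repr_mul_eq_zero hc hc0 hsq hb fun y => ?_)⟩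
  have htwist := repr_basis_mul_univ_eq_mul_repr_mul_basis_univ hc hc0 hsq hb
    (by rw [← he, ← hehat_eq]; exact hcomm i) y
  have hnakayama : b.repr (y * σ (e i)) univ = b.repr (e i * y) univ :=
    mul_left_cancel₀ hι (by rw [← hB, ← hB]; exact (hσ _ _).symm)
  rw [mul_sub, mul_smul_comm, map_sub, map_smul, Finsupp.sub_apply, Finsupp.smul_apply,
    smul_eq_mul, hnakayama, he, htwist, sub_self]
end
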